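/- arXiv:1805.01641 — 8 statements merged into one kernel-verified Lean document; each statement's English description precedes it below -/
import Mathlib

section
/- Let f_a(x) = (2πa)^{-1/2} exp(-x²/(2a)) be the density of the normal distribution N(0,a) with a > 0. Then for every z ∈ ℝ, ∫_ℝ |f_a(x) - f_a(x-z)| dx = √(2/(πa)) ∫_{-|z|/2}^{|z|/2} exp(-x²/(2a)) dx. In particular this quantity is at most √(2/(πa)) |z|. -/
open MeasureTheory Real Set

lemma shiftIic (g : ℝ → ℝ) (z c : ℝ) :
    ∫ x in Iic c, g (x - z) = ∫ x in Iic (c - z), g x := by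
  have h := (measurePreserving_sub_right (volume : Measure ℝ) z).setIntegral_preimage_emb
    (MeasurableEquiv.subRight z).measurableEmbedding g (Iic (c - z))
  have hp : (fun x : ℝ => x - z) ⁻¹' Iic (c - z) = Iic c := by
    ext x; simp [sub_le_sub_iff_right]
  simpa [MeasurableEquiv.subRight, hp] using h

lemma shiftIoi (g : ℝ → ℝ) (z c : ℝ) :
    ∫ x in Ioi c, g (x - z) = ∫ x in Ioi (c - z), g x := by
  have h := (measurePreserving_sub_right (volume : Measure ℝ) z).setIntegral_preimage_emb
    (MeasurableEquiv.subRight z).measurableEmbedding g (Ioi (c - z))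
  have hp : (fun x : ℝ => x - z) ⁻¹' Ioi (c - z) = Ioi c := by
    ext x; simp [sub_lt_sub_iff_right]
  simpa [MeasurableEquiv.subRight, hp] using h

lemma gauss_int (a : ℝ) (ha : 0 < a) :
    Integrable (fun x : ℝ => Real.exp (-x ^ 2 / (2 * a))) := by
  have h : (fun x : ℝ => Real.exp (-x ^ 2 / (2 * a)))
      = fun x => Real.exp (-(1 / (2 * a)) * x ^ 2) := by
    funext x; ring_nf
  rw [h]
  exact integrable_exp_neg_mul_sq (by positivity)

lemma key (a : ℝ) (ha : 0 < a) (z : ℝ) (hz : 0 ≤ z) :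
    (∫ x, |Real.exp (-x ^ 2 / (2 * a)) - Real.exp (-(x - z) ^ 2 / (2 * a))|)
      = 2 * ∫ x in Ioo (-(z / 2)) (z / 2), Real.exp (-x ^ 2 / (2 * a)) := by
  have hG : Integrable (fun x : ℝ => Real.exp (-x ^ 2 / (2 * a))) := gauss_int a ha
  have hGz : Integrable (fun x : ℝ => Real.exp (-(x - z) ^ 2 / (2 * a))) :=
    hG.comp_sub_right z
  have hF : Integrable
      (fun x : ℝ => |Real.exp (-x ^ 2 / (2 * a)) - Real.exp (-(x - z) ^ 2 / (2 * a))|) :=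
    (hG.sub hGz).abs
  set c : ℝ := z / 2 with hc
  have hcc : -c ≤ c := by rw [hc]; linarith
  have hczc : c - z = -c := by rw [hc]; ring
  have hsplit : (∫ x, |Real.exp (-x ^ 2 / (2 * a)) - Real.exp (-(x - z) ^ 2 / (2 * a))|)
      = (∫ x in Iic c, |Real.exp (-x ^ 2 / (2 * a)) - Real.exp (-(x - z) ^ 2 / (2 * a))|)
        + ∫ x in Ioi c, |Real.exp (-x ^ 2 / (2 * a)) - Real.exp (-(x - z) ^ 2 / (2 * a))| :=
    (intervalIntegral.integral_Iic_add_Ioi hF.integrableOn hF.integrableOn).symm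
  have hmonoL : ∀ x ∈ Iic c, Real.exp (-(x - z) ^ 2 / (2 * a)) ≤ Real.exp (-x ^ 2 / (2 * a)) := by
    intro x hx
    have hx' : x ≤ c := hx
    apply Real.exp_le_exp.2
    apply (div_le_div_iff_of_pos_right (by linarith : (0:ℝ) < 2 * a)).2
    nlinarith [hc]
  have hmonoR : ∀ x ∈ Ioi c, Real.exp (-x ^ 2 / (2 * a)) ≤ Real.exp (-(x - z) ^ 2 / (2 * a)) := by
    intro x hx
    have hx' : c < x := hx
    apply Real.exp_le_exp.2
    apply (div_le_div_iff_of_pos_right (by linarith : (0:ℝ) < 2 * a)).2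
    nlinarith [hc]
  have hL : (∫ x in Iic c, |Real.exp (-x ^ 2 / (2 * a)) - Real.exp (-(x - z) ^ 2 / (2 * a))|)
      = ∫ x in Ioc (-c) c, Real.exp (-x ^ 2 / (2 * a)) := by
    rw [setIntegral_congr_fun measurableSet_Iic
      (fun x hx => abs_of_nonneg (sub_nonneg.2 (hmonoL x hx)))]
    rw [integral_sub hG.integrableOn hGz.integrableOn,
      shiftIic (fun x => Real.exp (-x ^ 2 / (2 * a))) z c, hczc]
    have hU : Iic (-c) ∪ Ioc (-c) c = Iic c := Iic_union_Ioc_eq_Iic hcc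
    have h2 := setIntegral_union (Iic_disjoint_Ioc (le_refl (-c))) measurableSet_Ioc
      (hG.integrableOn (s := Iic (-c))) (hG.integrableOn (s := Ioc (-c) c))
    rw [hU] at h2
    rw [h2]; ring
  have hR : (∫ x in Ioi c, |Real.exp (-x ^ 2 / (2 * a)) - Real.exp (-(x - z) ^ 2 / (2 * a))|)
      = ∫ x in Ioc (-c) c, Real.exp (-x ^ 2 / (2 * a)) := by
    rw [setIntegral_congr_fun measurableSet_Ioi
      (fun x hx => abs_of_nonpos (sub_nonpos.2 (hmonoR x hx)))]
    rw [integral_neg, integral_sub hG.integrableOn hGz.integrableOn,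
      shiftIoi (fun x => Real.exp (-x ^ 2 / (2 * a))) z c, hczc]
    have hU : Ioc (-c) c ∪ Ioi c = Ioi (-c) := Ioc_union_Ioi_eq_Ioi hcc
    have h2 := setIntegral_union (Ioc_disjoint_Ioi (le_refl c)) measurableSet_Ioi
      (hG.integrableOn (s := Ioc (-c) c)) (hG.integrableOn (s := Ioi c))
    rw [hU] at h2
    rw [h2]; ring
  rw [hsplit, hL, hR, integral_Ioc_eq_integral_Ioo]
  ring

theorem stmt1 (a : ℝ) (ha : 0 < a) (z : ℝ) :
    (∫ x, |(2 * π * a) ^ (-(1:ℝ)/2) * Real.exp (-x ^ 2 / (2 * a))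
        - (2 * π * a) ^ (-(1:ℝ)/2) * Real.exp (-(x - z) ^ 2 / (2 * a))|)
      = Real.sqrt (2 / (π * a)) *
        ∫ x in Set.Ioo (-(|z| / 2)) (|z| / 2), Real.exp (-x ^ 2 / (2 * a)) ∧
    (∫ x, |(2 * π * a) ^ (-(1:ℝ)/2) * Real.exp (-x ^ 2 / (2 * a))
        - (2 * π * a) ^ (-(1:ℝ)/2) * Real.exp (-(x - z) ^ 2 / (2 * a))|)
      ≤ Real.sqrt (2 / (π * a)) * |z| := by
  have hpi := Real.pi_pos
  have h2pa : (0:ℝ) < 2 * π * a := by positivity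
  set C : ℝ := (2 * π * a) ^ (-(1:ℝ)/2) with hC
  have hCpos : 0 < C := Real.rpow_pos_of_pos h2pa _
  have hpull : (∫ x, |C * Real.exp (-x ^ 2 / (2 * a)) - C * Real.exp (-(x - z) ^ 2 / (2 * a))|)
      = C * ∫ x, |Real.exp (-x ^ 2 / (2 * a)) - Real.exp (-(x - z) ^ 2 / (2 * a))| := by
    simp_rw [← mul_sub, abs_mul, abs_of_pos hCpos]
    exact integral_const_mul C _
  have hzabs : (∫ x, |Real.exp (-x ^ 2 / (2 * a)) - Real.exp (-(x - z) ^ 2 / (2 * a))|)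
      = ∫ x, |Real.exp (-x ^ 2 / (2 * a)) - Real.exp (-(x - |z|) ^ 2 / (2 * a))| := by
    rcases le_or_gt 0 z with h | h
    · rw [abs_of_nonneg h]
    · rw [abs_of_neg h]
      have hneg := MeasureTheory.integral_neg_eq_self
        (fun x : ℝ => |Real.exp (-x ^ 2 / (2 * a)) - Real.exp (-(x - z) ^ 2 / (2 * a))|)
        (volume : Measure ℝ)
      rw [← hneg]
      congr 1
      funext x
      have e1 : (-x : ℝ) ^ 2 = x ^ 2 := by ring
      have e2 : (-x - z : ℝ) ^ 2 = (x - -z) ^ 2 := by ring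
      rw [e1, e2]
  have hkey := key a ha |z| (abs_nonneg z)
  have hCval : C = (Real.sqrt (2 * π * a))⁻¹ := by
    rw [hC, show (-(1:ℝ)/2) = -(1/2 : ℝ) by ring, Real.rpow_neg h2pa.le,
      ← Real.sqrt_eq_rpow]
  have hsq : Real.sqrt (2 / (π * a)) = 2 * C := by
    rw [hCval]
    have h4 : (2 : ℝ) / (π * a) = 4 / (2 * π * a) := by
      field_simp; ring
    rw [h4, Real.sqrt_div (by norm_num : (0:ℝ) ≤ 4),
      show (4:ℝ) = 2 ^ 2 by norm_num, Real.sqrt_sq (by norm_num : (0:ℝ) ≤ 2)]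
    rw [div_eq_mul_inv]
  have hbd : (∫ x in Set.Ioo (-(|z| / 2)) (|z| / 2), Real.exp (-x ^ 2 / (2 * a))) ≤ |z| := by
    have h1 : (∫ x in Set.Ioo (-(|z| / 2)) (|z| / 2), Real.exp (-x ^ 2 / (2 * a)))
        ≤ ∫ _x in Set.Ioo (-(|z| / 2)) (|z| / 2), (1:ℝ) := by
      apply setIntegral_mono_on (gauss_int a ha).integrableOn
        (integrableOn_const measure_Ioo_lt_top.ne) measurableSet_Ioo
      intro x _
      apply Real.exp_le_one_iff.2
      have hx2 : -x ^ 2 ≤ 0 := by nlinarith [sq_nonneg x]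
      exact div_nonpos_of_nonpos_of_nonneg hx2 (by linarith)
    have h2 : (∫ _x in Set.Ioo (-(|z| / 2)) (|z| / 2), (1:ℝ)) = |z| := by
      rw [setIntegral_const, measureReal_def, Real.volume_Ioo, smul_eq_mul, mul_one,
        ENNReal.toReal_ofReal (by linarith [abs_nonneg z] : (0:ℝ) ≤ |z| / 2 - -(|z| / 2))]
      ring
    linarith
  have hInonneg : 0 ≤ ∫ x in Set.Ioo (-(|z| / 2)) (|z| / 2), Real.exp (-x ^ 2 / (2 * a)) :=
    setIntegral_nonneg measurableSet_Ioo (fun x _ => (Real.exp_pos _).le)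
  constructor
  · rw [hpull, hzabs, hkey, hsq]; ring
  · rw [hpull, hzabs, hkey, hsq]
    nlinarith [hbd, hCpos, hInonneg]
end

section
/- For the density f_a of the normal distribution N(0,a) with a > 0, the limit as z → 0 of |z|^{-1} ∫_ℝ |f_a(x) - f_a(x-z)| dx equals √(2/(πa)). -/
open MeasureTheory Real Filter Set

namespace Stmt2Aux

noncomputable def f (a : ℝ) (x : ℝ) : ℝ :=
  (2 * π * a) ^ (-(1:ℝ)/2) * Real.exp (-x ^ 2 / (2 * a))

lemma f_nonneg (a : ℝ) (ha : 0 < a) (x : ℝ) : 0 ≤ f a x :=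
  mul_nonneg (Real.rpow_nonneg (by positivity) _) (Real.exp_nonneg _)

lemma f_cont (a : ℝ) : Continuous (f a) := by
  unfold f; fun_prop

lemma hf_int (a : ℝ) (ha : 0 < a) : Integrable (f a) := by
  have h : Integrable (fun x : ℝ => Real.exp (-(1/(2*a)) * x ^ 2)) :=
    integrable_exp_neg_mul_sq (by positivity)
  have h2 := h.const_mul ((2 * π * a) ^ (-(1:ℝ)/2))
  have hfe : ∀ x : ℝ, (2 * π * a) ^ (-(1:ℝ)/2) * Real.exp (-(1/(2*a)) * x ^ 2) = f a x := by
    intro x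
    unfold f
    rw [show -x ^ 2 / (2*a) = -(1/(2*a)) * x ^ 2 by ring]
  exact h2.congr (ae_of_all _ hfe)

lemma f_mono (a : ℝ) (ha : 0 < a) {x y : ℝ} (h : x ^ 2 ≤ y ^ 2) : f a y ≤ f a x := by
  unfold f
  refine mul_le_mul_of_nonneg_left (Real.exp_le_exp.2 ?_) (Real.rpow_nonneg (by positivity) _)
  rw [neg_div, neg_div, neg_le_neg_iff]
  gcongr

lemma shift_Iic (g : ℝ → ℝ) (c z : ℝ) :
    ∫ x in Iic c, g (x - z) = ∫ x in Iic (c - z), g x := by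
  rw [← integral_indicator measurableSet_Iic, ← integral_indicator measurableSet_Iic,
    ← integral_sub_right_eq_self (fun x => (Iic (c - z)).indicator g x) z]
  congr 1; funext x
  by_cases h : x ≤ c
  · simp [Set.indicator_apply, h, mem_Iic, sub_le_sub_iff_right]
  · simp [Set.indicator_apply, h, mem_Iic, sub_le_sub_iff_right]

lemma key (a : ℝ) (ha : 0 < a) {z : ℝ} (hz : 0 < z) :
    ∫ x, |f a x - f a (x - z)| = 2 * ∫ t in (-(z/2))..(z/2), f a t := by
  have hf := hf_int a ha
  have hfz : Integrable (fun x => f a (x - z)) := hf.comp_sub_right z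
  have habs : Integrable (fun x => |f a x - f a (x - z)|) := (hf.sub hfz).abs
  set c := z/2 with hc
  have e1 : ∫ x in Iic c, |f a x - f a (x - z)|
      = (∫ x in Iic c, f a x) - ∫ x in Iic (c - z), f a x := by
    rw [setIntegral_congr_fun measurableSet_Iic
      (g := fun x => f a x - f a (x - z)) (fun x hx => ?_)]
    · rw [integral_sub hf.integrableOn hfz.integrableOn, shift_Iic]
    · have hle : f a (x - z) ≤ f a x := by
        refine f_mono a ha ?_
        have hx' : x ≤ z / 2 := hx
        nlinarith [mul_nonneg hz.le (by linarith : (0:ℝ) ≤ z - 2*x)]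
      exact abs_of_nonneg (by linarith)
  have hA : ∫ x in Ioi c, f a (x - z) = ∫ x in Ioi (c - z), f a x := by
    have h1 := intervalIntegral.integral_Iic_add_Ioi (b := c) hfz.integrableOn hfz.integrableOn
    have h2 := intervalIntegral.integral_Iic_add_Ioi (b := c - z) hf.integrableOn hf.integrableOn
    have h3 : ∫ x, f a (x - z) = ∫ x, f a x := integral_sub_right_eq_self _ z
    have h4 := shift_Iic (f a) c z
    linarith
  have e2 : ∫ x in Ioi c, |f a x - f a (x - z)|
      = (∫ x in Ioi (c - z), f a x) - ∫ x in Ioi c, f a x := by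
    rw [setIntegral_congr_fun measurableSet_Ioi
      (g := fun x => f a (x - z) - f a x) (fun x hx => ?_)]
    · rw [integral_sub hfz.integrableOn hf.integrableOn, hA]
    · have hle : f a x ≤ f a (x - z) := by
        refine f_mono a ha ?_
        have hx' : z / 2 < x := hx
        nlinarith [mul_nonneg hz.le (by linarith : (0:ℝ) ≤ 2*x - z)]
      rw [abs_sub_comm]
      exact abs_of_nonneg (by linarith)
  have g1 := intervalIntegral.integral_Iic_add_Ioi (b := c) hf.integrableOn hf.integrableOn
  have g2 := intervalIntegral.integral_Iic_add_Ioi (b := c - z) hf.integrableOn hf.integrableOn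
  have hsplit := intervalIntegral.integral_Iic_add_Ioi (b := c) habs.integrableOn habs.integrableOn
  have hII : (∫ x in Iic c, f a x) - ∫ x in Iic (c - z), f a x
      = ∫ t in (-c)..c, f a t := by
    rw [intervalIntegral.integral_Iic_sub_Iic hf.integrableOn hf.integrableOn]
    have h5 : c - z = -c := by rw [hc]; ring
    rw [h5]
  linarith

lemma key' (a : ℝ) (ha : 0 < a) {z : ℝ} (hz : z ≠ 0) :
    ∫ x, |f a x - f a (x - z)| = 2 * |∫ t in (-(z/2))..(z/2), f a t| := by
  rcases lt_or_gt_of_ne hz with hneg | hpos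
  · set w := -z with hw
    have hwpos : 0 < w := by simp [hw]; linarith
    have h1 : ∫ x, |f a x - f a (x - z)| = ∫ x, |f a x - f a (x - w)| := by
      rw [← integral_sub_right_eq_self (fun x => |f a x - f a (x - z)|) w]
      congr 1; funext x
      rw [abs_sub_comm]
      congr 2 <;> · congr 1; rw [hw]; ring
    have h2 : |∫ t in (-(z/2))..(z/2), f a t| = ∫ t in (-(w/2))..(w/2), f a t := by
      rw [show -(z/2) = w/2 by rw [hw]; ring, show z/2 = -(w/2) by rw [hw]; ring,
        intervalIntegral.integral_symm, abs_neg,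
        abs_of_nonneg (intervalIntegral.integral_nonneg (by linarith)
          fun u _ => f_nonneg a ha u)]
    rw [h1, key a ha hwpos, h2]
  · rw [key a ha hpos]
    congr 1
    rw [abs_of_nonneg]
    refine intervalIntegral.integral_nonneg (by linarith) fun u _ => f_nonneg a ha u

lemma deriv_h (a : ℝ) (ha : 0 < a) :
    HasDerivAt (fun z : ℝ => ∫ t in (-(z/2))..(z/2), f a t) (f a 0) 0 := by
  have hf := hf_int a ha
  have hii : ∀ u v : ℝ, IntervalIntegrable (f a) volume u v := fun u v =>
    hf.intervalIntegrable
  have hF : HasDerivAt (fun u : ℝ => ∫ t in (0:ℝ)..u, f a t) (f a 0) 0 :=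
    intervalIntegral.integral_hasDerivAt_right (hii 0 0)
      ((f_cont a).stronglyMeasurableAtFilter _ _) (f_cont a).continuousAt
  have h1 : HasDerivAt (fun z : ℝ => ∫ t in (0:ℝ)..(z/2), f a t) (f a 0 * (1/2)) 0 := by
    have hmul : HasDerivAt (fun z : ℝ => z/2) (1/2 : ℝ) 0 := (hasDerivAt_id (0:ℝ)).div_const 2
    have hF2 : HasDerivAt (fun u : ℝ => ∫ t in (0:ℝ)..u, f a t) (f a 0) ((0:ℝ)/2) := by
      norm_num; exact hF
    have := hF2.comp (0:ℝ) hmul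
    simpa [Function.comp_def] using this
  have h2 : HasDerivAt (fun z : ℝ => ∫ t in (0:ℝ)..(-(z/2)), f a t) (f a 0 * (-(1/2))) 0 := by
    have hmul : HasDerivAt (fun z : ℝ => -(z/2)) (-(1/2) : ℝ) 0 := by
      simpa [Pi.neg_def] using ((hasDerivAt_id (0:ℝ)).div_const 2).neg
    have hF2 : HasDerivAt (fun u : ℝ => ∫ t in (0:ℝ)..u, f a t) (f a 0) (-((0:ℝ)/2)) := by
      norm_num; exact hF
    have := hF2.comp (0:ℝ) hmul
    simpa [Function.comp_def] using this
  have h3 := h1.sub h2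
  have heq : (fun z : ℝ => (∫ t in (0:ℝ)..(z/2), f a t) - ∫ t in (0:ℝ)..(-(z/2)), f a t)
      = fun z : ℝ => ∫ t in (-(z/2))..(z/2), f a t := by
    funext z
    rw [intervalIntegral.integral_interval_sub_left (hii 0 (z/2)) (hii 0 (-(z/2)))]
  simp only [Pi.sub_def] at h3
  rw [heq] at h3
  rw [show f a 0 * (1 / 2) - f a 0 * -(1 / 2) = f a 0 by ring] at h3
  exact h3

lemma f_zero (a : ℝ) (ha : 0 < a) : 2 * f a 0 = Real.sqrt (2 / (π * a)) := by
  have hpa : (0:ℝ) < 2 * π * a := by positivity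
  have h1 : f a 0 = (2 * π * a) ^ (-(1:ℝ)/2) := by
    unfold f; norm_num
  rw [h1]
  have h2 : (2 * π * a) ^ (-(1:ℝ)/2) = (Real.sqrt (2 * π * a))⁻¹ := by
    rw [show (-(1:ℝ)/2) = -(1/2 : ℝ) by ring, Real.rpow_neg hpa.le,
      ← Real.sqrt_eq_rpow]
  rw [h2]
  rw [show (2:ℝ) / (π * a) = 4 / (2 * π * a) by field_simp; ring]
  have hs : (0:ℝ) < Real.sqrt (2 * π * a) := Real.sqrt_pos.2 hpa
  have hkey : Real.sqrt (4 / (2 * π * a)) * Real.sqrt (2 * π * a) = 2 := by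
    rw [← Real.sqrt_mul (by positivity)]
    rw [show 4 / (2 * π * a) * (2 * π * a) = 4 by field_simp]
    rw [show (4:ℝ) = 2 ^ 2 by norm_num, Real.sqrt_sq (by norm_num)]
  have h3 : 2 * (Real.sqrt (2 * π * a))⁻¹ * Real.sqrt (2 * π * a)
      = Real.sqrt (4 / (2 * π * a)) * Real.sqrt (2 * π * a) := by
    rw [hkey]; field_simp
  exact mul_right_cancel₀ hs.ne' h3

end Stmt2Aux

open Stmt2Aux in
theorem stmt2 (a : ℝ) (ha : 0 < a) :
    Tendsto (fun z : ℝ => |z|⁻¹ *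
        ∫ x, |(2 * π * a) ^ (-(1:ℝ)/2) * Real.exp (-x ^ 2 / (2 * a))
          - (2 * π * a) ^ (-(1:ℝ)/2) * Real.exp (-(x - z) ^ 2 / (2 * a))|)
      (nhdsWithin 0 {0}ᶜ) (nhds (Real.sqrt (2 / (π * a)))) := by
  set h : ℝ → ℝ := fun z => ∫ t in (-(z/2))..(z/2), f a t with hh
  have hder := deriv_h a ha
  have hslope : Tendsto (slope h 0) (nhdsWithin 0 {0}ᶜ) (nhds (f a 0)) :=
    hasDerivAt_iff_tendsto_slope.1 hder
  have habs : Tendsto (fun z => 2 * |slope h 0 z|) (nhdsWithin 0 {0}ᶜ)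
      (nhds (2 * |f a 0|)) := (hslope.abs.const_mul 2)
  have hfz0 : 2 * |f a 0| = Real.sqrt (2 / (π * a)) := by
    rw [abs_of_nonneg (f_nonneg a ha 0), f_zero a ha]
  rw [← hfz0]
  refine habs.congr' ?_
  filter_upwards [self_mem_nhdsWithin] with z hz
  have hz' : z ≠ 0 := hz
  have h0 : h 0 = 0 := by simp [hh]
  have hslope_eq : slope h 0 z = h z / z := by
    rw [slope_def_field]; rw [h0]; ring_nf
  have hk := key' a ha hz'
  have heq : (∫ x, |(2 * π * a) ^ (-(1:ℝ)/2) * Real.exp (-x ^ 2 / (2 * a))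
          - (2 * π * a) ^ (-(1:ℝ)/2) * Real.exp (-(x - z) ^ 2 / (2 * a))|)
      = ∫ x, |f a x - f a (x - z)| := rfl
  rw [hslope_eq, abs_div, heq, hk]
  simp only [hh]
  ring
end

section
/- Let f : ℝ → ℝ be an integrable unimodal probability density with mode m (i.e., f is nondecreasing on (-∞, m) and nonincreasing on (m, ∞)) and suppose f ∈ L^{p*}(ℝ) with p* = p/(p-1) for some 1 < p ≤ 2. Then for every z > 0, ∫_ℝ |f(x-z) - f(x)| dx ≤ (2 + 2^{1/p}) ||f||_{L^{p*}} z^{1/p}. -/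
open MeasureTheory Set

theorem stmt4 (f : ℝ → ℝ) (m : ℝ) (p : ℝ) (hp1 : 1 < p) (hp2 : p ≤ 2)
    (hf_nonneg : ∀ x, 0 ≤ f x) (hf_int : Integrable f) (hf_one : ∫ x, f x = 1)
    (hmono : MonotoneOn f (Set.Iic m)) (hanti : AntitoneOn f (Set.Ici m))
    (hLp : MemLp f (ENNReal.ofReal (p / (p - 1)))) :
    ∀ z : ℝ, 0 < z →
      ∫ x, |f (x - z) - f x|
        ≤ (2 + 2 ^ (1 / p)) * (eLpNorm f (ENNReal.ofReal (p / (p - 1))) volume).toReal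
            * z ^ (1 / p) := by
  intro z hz
  have hp0 : 0 < p := lt_trans zero_lt_one hp1
  set q : ℝ := p / (p - 1) with hq_def
  have hpq : p.HolderConjugate q := Real.HolderConjugate.conjExponent hp1
  have hq1 : 1 < q := hpq.symm.lt
  -- basic integrability
  have hshift_int : Integrable (fun x => f (x - z)) := hf_int.comp_sub_right z
  have hdiff_int : Integrable (fun x => |f (x - z) - f x|) := (hshift_int.sub hf_int).abs
  -- shifted set integrals
  have hemb : MeasurableEmbedding (fun x : ℝ => x - z) :=
    (MeasurableEquiv.subRight z).measurableEmbedding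
  have hmp : MeasurePreserving (fun x : ℝ => x - z) volume volume :=
    measurePreserving_sub_right volume z
  have hshift : ∀ s : Set ℝ,
      ∫ x in (fun x : ℝ => x - z) ⁻¹' s, f (x - z) = ∫ x in s, f x :=
    fun s => hmp.setIntegral_preimage_emb hemb f s
  have hIic : ∫ x in Iic m, f (x - z) = ∫ x in Iic (m - z), f x := by
    have h := hshift (Iic (m - z))
    rwa [show (fun x : ℝ => x - z) ⁻¹' Iic (m - z) = Iic m by
      ext x; simp] at h
  have hIoi : ∫ x in Ioi (m + z), f (x - z) = ∫ x in Ioi m, f x := by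
    have h := hshift (Ioi m)
    rwa [show (fun x : ℝ => x - z) ⁻¹' Ioi m = Ioi (m + z) by
      ext x; simp [lt_sub_iff_add_lt]] at h
  have hIoc : ∫ x in Ioc m (m + z), f (x - z) = ∫ x in Ioc (m - z) m, f x := by
    have h := hshift (Ioc (m - z) m)
    rwa [show (fun x : ℝ => x - z) ⁻¹' Ioc (m - z) m = Ioc m (m + z) by
      ext x
      simp only [mem_preimage, mem_Ioc]
      constructor <;> intro h <;> constructor <;> linarith [h.1, h.2]] at h
  -- abbreviations
  set A := ∫ x in Ioc (m - z) m, f x with hA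
  set B := ∫ x in Ioc m (m + z), f x with hB
  -- telescoping on the left
  have hsplit_left : ∫ x in Iic m, f x = (∫ x in Iic (m - z), f x) + A := by
    rw [hA, ← setIntegral_union (Iic_disjoint_Ioc le_rfl) measurableSet_Ioc
      hf_int.integrableOn hf_int.integrableOn,
      Iic_union_Ioc_eq_Iic (by linarith : m - z ≤ m)]
  have hsplit_right : ∫ x in Ioi m, f x = B + ∫ x in Ioi (m + z), f x := by
    rw [hB, ← setIntegral_union (Ioc_disjoint_Ioi le_rfl) measurableSet_Ioi
      hf_int.integrableOn hf_int.integrableOn,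
      Ioc_union_Ioi_eq_Ioi (by linarith : m ≤ m + z)]
  -- piece 1
  have hP1 : ∫ x in Iic m, |f (x - z) - f x| = A := by
    have heq : ∫ x in Iic m, |f (x - z) - f x| = ∫ x in Iic m, (f x - f (x - z)) := by
      refine setIntegral_congr_fun measurableSet_Iic fun x hx => ?_
      have hx' : x ∈ Iic m := hx
      have h1 : f (x - z) ≤ f x :=
        hmono (by simpa using (by linarith [mem_Iic.1 hx'] : x - z ≤ m)) hx' (by linarith)
      rw [abs_of_nonpos (by linarith), neg_sub]
    rw [heq, integral_sub hf_int.integrableOn hshift_int.integrableOn, hIic]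
    linarith [hsplit_left]
  -- piece 3
  have hP3 : ∫ x in Ioi (m + z), |f (x - z) - f x| = B := by
    have heq : ∫ x in Ioi (m + z), |f (x - z) - f x|
        = ∫ x in Ioi (m + z), (f (x - z) - f x) := by
      refine setIntegral_congr_fun measurableSet_Ioi fun x hx => ?_
      have hx' : m + z < x := hx
      have h1 : f x ≤ f (x - z) :=
        hanti (by simp only [mem_Ici]; linarith) (by simp only [mem_Ici]; linarith)
          (by linarith)
      rw [abs_of_nonneg (by linarith)]
    rw [heq, integral_sub hshift_int.integrableOn hf_int.integrableOn, hIoi]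
    linarith [hsplit_right]
  -- piece 2
  have hP2 : ∫ x in Ioc m (m + z), |f (x - z) - f x| ≤ A + B := by
    have hle : ∫ x in Ioc m (m + z), |f (x - z) - f x|
        ≤ ∫ x in Ioc m (m + z), (f (x - z) + f x) := by
      refine setIntegral_mono_on hdiff_int.integrableOn
        (hshift_int.integrableOn.add hf_int.integrableOn) measurableSet_Ioc fun x _ => ?_
      have := hf_nonneg (x - z); have := hf_nonneg x
      rw [abs_le]; constructor <;> linarith
    calc ∫ x in Ioc m (m + z), |f (x - z) - f x|
        ≤ ∫ x in Ioc m (m + z), (f (x - z) + f x) := hle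
      _ = A + B := by
          rw [integral_add hshift_int.integrableOn hf_int.integrableOn, hIoc]
  -- total splitting
  have htotal : ∫ x, |f (x - z) - f x| ≤ 2 * (A + B) := by
    have h1 : (∫ x in Iic m, |f (x - z) - f x|) + ∫ x in Ioi m, |f (x - z) - f x|
        = ∫ x, |f (x - z) - f x| :=
      intervalIntegral.integral_Iic_add_Ioi hdiff_int.integrableOn hdiff_int.integrableOn
    have h2 : ∫ x in Ioi m, |f (x - z) - f x|
        = (∫ x in Ioc m (m + z), |f (x - z) - f x|)
          + ∫ x in Ioi (m + z), |f (x - z) - f x| := by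
      rw [← setIntegral_union (Ioc_disjoint_Ioi le_rfl) measurableSet_Ioi
        hdiff_int.integrableOn hdiff_int.integrableOn,
        Ioc_union_Ioi_eq_Ioi (by linarith : m ≤ m + z)]
    rw [← h1, h2, hP1, hP3]
    linarith [hP2]
  -- A + B as one integral
  have hAB : A + B = ∫ x in Ioc (m - z) (m + z), f x := by
    rw [hA, hB, ← setIntegral_union (Ioc_disjoint_Ioc_of_le le_rfl) measurableSet_Ioc
      hf_int.integrableOn hf_int.integrableOn,
      Ioc_union_Ioc_eq_Ioc (by linarith) (by linarith)]
  -- Hölder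
  set s : Set ℝ := Ioc (m - z) (m + z) with hs_def
  have hs_meas : MeasurableSet s := measurableSet_Ioc
  have hs_vol : volume s = ENNReal.ofReal (2 * z) := by
    rw [hs_def, Real.volume_Ioc]; ring_nf
  set N := (eLpNorm f (ENNReal.ofReal q) volume).toReal with hN
  have hN_nonneg : 0 ≤ N := ENNReal.toReal_nonneg
  have hHolder : ∫ x in s, f x ≤ (2 * z) ^ (1 / p) * N := by
    have hind : MemLp (s.indicator fun _ => (1 : ℝ)) (ENNReal.ofReal p) volume :=
      memLp_indicator_const _ hs_meas 1 (Or.inr (by rw [hs_vol]; exact ENNReal.ofReal_ne_top))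
    have key := integral_mul_le_Lp_mul_Lq_of_nonneg hpq
      (ae_of_all _ fun x => indicator_nonneg (fun _ _ => zero_le_one) x)
      (ae_of_all _ hf_nonneg) hind hLp
    have hlhs : ∫ x, s.indicator (fun _ => (1 : ℝ)) x * f x = ∫ x in s, f x := by
      rw [← integral_indicator hs_meas]
      congr 1; ext x
      by_cases hx : x ∈ s <;> simp [indicator_of_mem, indicator_of_notMem, hx]
    have hrhs1 : ∫ x, s.indicator (fun _ => (1 : ℝ)) x ^ p = 2 * z := by
      have : (fun x => s.indicator (fun _ => (1 : ℝ)) x ^ p) = s.indicator fun _ => (1 : ℝ) := by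
        ext x
        by_cases hx : x ∈ s <;>
          simp [indicator_of_mem, indicator_of_notMem, hx, Real.zero_rpow hp0.ne',
            Real.one_rpow]
      rw [this, integral_indicator hs_meas, setIntegral_const, measureReal_def, hs_vol, smul_eq_mul, mul_one,
        ENNReal.toReal_ofReal (by linarith)]
    have hrhs2 : (∫ x, f x ^ q) ^ (1 / q) = N := by
      have hq0 : (0 : ℝ) < q := lt_trans zero_lt_one hq1
      have heq := hLp.eLpNorm_eq_integral_rpow_norm
        (by simp [ENNReal.ofReal_eq_zero, not_le, hq0]) ENNReal.ofReal_ne_top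
      rw [hN, heq, ENNReal.toReal_ofReal (Real.rpow_nonneg
        (integral_nonneg fun x => Real.rpow_nonneg (norm_nonneg _) _) _)]
      rw [ENNReal.toReal_ofReal hq0.le]
      congr 1
      · refine integral_congr_ae (ae_of_all _ fun x => ?_)
        show f x ^ q = ‖f x‖ ^ q
        rw [Real.norm_of_nonneg (hf_nonneg x)]
      · rw [one_div]
    calc ∫ x in s, f x = ∫ x, s.indicator (fun _ => (1 : ℝ)) x * f x := hlhs.symm
      _ ≤ (∫ x, s.indicator (fun _ => (1 : ℝ)) x ^ p) ^ (1 / p) * (∫ x, f x ^ q) ^ (1 / q) := key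
      _ = (2 * z) ^ (1 / p) * N := by rw [hrhs1, hrhs2]
  -- final arithmetic
  have hzp : (0 : ℝ) ≤ z ^ (1 / p) := Real.rpow_nonneg hz.le _
  have h2zp : (2 * z) ^ (1 / p) = 2 ^ (1 / p) * z ^ (1 / p) :=
    Real.mul_rpow (by norm_num) hz.le
  have h2p_le : (2 : ℝ) ^ (1 / p) ≤ 2 := by
    calc (2 : ℝ) ^ (1 / p) ≤ 2 ^ (1 : ℝ) :=
          Real.rpow_le_rpow_of_exponent_le one_le_two
            (by rw [div_le_one hp0]; linarith)
      _ = 2 := Real.rpow_one 2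
  have h2p_nonneg : (0 : ℝ) ≤ 2 ^ (1 / p) := Real.rpow_nonneg (by norm_num) _
  calc ∫ x, |f (x - z) - f x| ≤ 2 * (A + B) := htotal
    _ = 2 * ∫ x in s, f x := by rw [hAB]
    _ ≤ 2 * ((2 * z) ^ (1 / p) * N) := by
        have hABnn : 0 ≤ ∫ x in s, f x := integral_nonneg fun x => hf_nonneg x
        nlinarith [hHolder]
    _ = (2 * 2 ^ (1 / p)) * N * z ^ (1 / p) := by rw [h2zp]; ring
    _ ≤ (2 + 2 ^ (1 / p)) * N * z ^ (1 / p) := by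
        have : (2 : ℝ) * 2 ^ (1 / p) ≤ 2 + 2 ^ (1 / p) := by nlinarith
        have h1 : 0 ≤ N * z ^ (1 / p) := mul_nonneg hN_nonneg hzp
        nlinarith
end

section
/- Let f : ℝ → ℝ be a bounded continuous unimodal probability density with mode m. Then for every z > 0, ∫_ℝ |f(x-z) - f(x)| dx ≤ 4 (sup_x |f(x)|) z. -/
open MeasureTheory Set

theorem stmt5 (f : ℝ → ℝ) (m : ℝ)
    (hf_nonneg : ∀ x, 0 ≤ f x) (hf_int : Integrable f) (hf_one : ∫ x, f x = 1)
    (hf_cont : Continuous f) (hf_bdd : BddAbove (Set.range fun x => |f x|))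
    (hmono : MonotoneOn f (Set.Iic m)) (hanti : AntitoneOn f (Set.Ici m)) :
    ∀ z : ℝ, 0 < z → ∫ x, |f (x - z) - f x| ≤ 4 * (⨆ x, |f x|) * z := by
  intro z hz
  set M := ⨆ x, |f x| with hM
  have hle : ∀ x, f x ≤ M := fun x => (le_abs_self _).trans (le_ciSup hf_bdd x)
  have hM0 : 0 ≤ M := (abs_nonneg (f 0)).trans (le_ciSup hf_bdd 0)
  have hfz : Integrable (fun x => f (x - z)) := hf_int.comp_sub_right z
  have hgint : Integrable (fun x => |f (x - z) - f x|) := (hfz.sub hf_int).abs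
  -- shift lemmas
  have shiftIic : ∫ x in Iic m, f (x - z) = ∫ x in Iic (m - z), f x := by
    rw [← integral_indicator measurableSet_Iic, ← integral_indicator measurableSet_Iic]
    have heq : (Iic m).indicator (fun x => f (x - z))
        = fun x => (Iic (m - z)).indicator f (x - z) := by
      funext x
      by_cases h : x ≤ m
      · rw [Set.indicator_of_mem (mem_Iic.mpr h),
          Set.indicator_of_mem (mem_Iic.mpr (by linarith))]
      · rw [Set.indicator_of_notMem (by simpa using h),
          Set.indicator_of_notMem (by simp; linarith)]
    rw [heq]
    exact integral_sub_right_eq_self ((Iic (m - z)).indicator f) z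
  have shiftIoi : ∫ x in Ioi (m + z), f (x - z) = ∫ x in Ioi m, f x := by
    rw [← integral_indicator measurableSet_Ioi, ← integral_indicator measurableSet_Ioi]
    have heq : (Ioi (m + z)).indicator (fun x => f (x - z))
        = fun x => (Ioi m).indicator f (x - z) := by
      funext x
      by_cases h : m + z < x
      · rw [Set.indicator_of_mem (mem_Ioi.mpr h),
          Set.indicator_of_mem (mem_Ioi.mpr (by linarith))]
      · rw [Set.indicator_of_notMem (by simpa using h),
          Set.indicator_of_notMem (by simp at h ⊢; linarith)]
    rw [heq]
    exact integral_sub_right_eq_self ((Ioi m).indicator f) z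
  -- volume facts
  have hvol1 : (volume (Ioc (m - z) m)).toReal = z := by
    rw [Real.volume_Ioc, ENNReal.toReal_ofReal (by linarith)]; ring
  have hvol2 : (volume (Ioc m (m + z))).toReal = z := by
    rw [Real.volume_Ioc, ENNReal.toReal_ofReal (by linarith)]; ring
  -- bound on interval integrals of f
  have bound1 : ∫ x in Ioc (m - z) m, f x ≤ M * z := by
    have := norm_setIntegral_le_of_norm_le_const (C := M)
      (f := f) (s := Ioc (m - z) m) (μ := volume)
      (by rw [Real.volume_Ioc]; exact ENNReal.ofReal_lt_top)
      (fun x _ => by rw [Real.norm_eq_abs, abs_of_nonneg (hf_nonneg x)]; exact hle x)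
    rw [measureReal_def, hvol1] at this
    exact (le_abs_self _).trans this
  have bound2 : ∫ x in Ioc m (m + z), f x ≤ M * z := by
    have := norm_setIntegral_le_of_norm_le_const (C := M)
      (f := f) (s := Ioc m (m + z)) (μ := volume)
      (by rw [Real.volume_Ioc]; exact ENNReal.ofReal_lt_top)
      (fun x _ => by rw [Real.norm_eq_abs, abs_of_nonneg (hf_nonneg x)]; exact hle x)
    rw [measureReal_def, hvol2] at this
    exact (le_abs_self _).trans this
  -- piece 1 : on Iic m
  have piece1 : ∫ x in Iic m, |f (x - z) - f x| ≤ M * z := by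
    have hcong : ∫ x in Iic m, |f (x - z) - f x| = ∫ x in Iic m, (f x - f (x - z)) := by
      refine setIntegral_congr_fun measurableSet_Iic (fun x hx => ?_)
      have hx' : x ≤ m := hx
      have h1 : f (x - z) ≤ f x :=
        hmono (mem_Iic.mpr (by linarith)) (mem_Iic.mpr hx') (by linarith)
      rw [abs_of_nonpos (by linarith), neg_sub]
    rw [hcong, integral_sub hf_int.integrableOn (hfz.integrableOn), shiftIic]
    have hsplit : ∫ x in Iic m, f x
        = (∫ x in Iic (m - z), f x) + ∫ x in Ioc (m - z) m, f x := by
      rw [← setIntegral_union (Iic_disjoint_Ioc le_rfl) measurableSet_Ioc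
        hf_int.integrableOn hf_int.integrableOn, Iic_union_Ioc_eq_Iic (by linarith)]
    linarith
  -- piece 2 : on Ioc m (m+z)
  have piece2 : ∫ x in Ioc m (m + z), |f (x - z) - f x| ≤ M * z := by
    have := norm_setIntegral_le_of_norm_le_const (C := M)
      (f := fun x => |f (x - z) - f x|) (s := Ioc m (m + z)) (μ := volume)
      (by rw [Real.volume_Ioc]; exact ENNReal.ofReal_lt_top)
      (fun x _ => by
        rw [Real.norm_eq_abs, abs_abs]
        have h1 := hf_nonneg x; have h2 := hf_nonneg (x - z)
        have h3 := hle x; have h4 := hle (x - z)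
        rw [abs_sub_le_iff]; constructor <;> linarith)
    rw [measureReal_def, hvol2] at this
    exact (le_abs_self _).trans this
  -- piece 3 : on Ioi (m+z)
  have piece3 : ∫ x in Ioi (m + z), |f (x - z) - f x| ≤ M * z := by
    have hcong : ∫ x in Ioi (m + z), |f (x - z) - f x|
        = ∫ x in Ioi (m + z), (f (x - z) - f x) := by
      refine setIntegral_congr_fun measurableSet_Ioi (fun x hx => ?_)
      have hx' : m + z < x := hx
      have h1 : f x ≤ f (x - z) :=
        hanti (mem_Ici.mpr (by linarith)) (mem_Ici.mpr (by linarith)) (by linarith)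
      rw [abs_of_nonneg (by linarith)]
    rw [hcong, integral_sub hfz.integrableOn hf_int.integrableOn, shiftIoi]
    have hsplit : ∫ x in Ioi m, f x
        = (∫ x in Ioc m (m + z), f x) + ∫ x in Ioi (m + z), f x := by
      rw [← setIntegral_union (Ioc_disjoint_Ioi le_rfl) measurableSet_Ioi
        hf_int.integrableOn hf_int.integrableOn, Ioc_union_Ioi_eq_Ioi (by linarith)]
    linarith
  -- assemble
  have split1 : ∫ x, |f (x - z) - f x|
      = (∫ x in Iic m, |f (x - z) - f x|) + ∫ x in Ioi m, |f (x - z) - f x| :=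
    (intervalIntegral.integral_Iic_add_Ioi hgint.integrableOn hgint.integrableOn).symm
  have split2 : ∫ x in Ioi m, |f (x - z) - f x|
      = (∫ x in Ioc m (m + z), |f (x - z) - f x|)
        + ∫ x in Ioi (m + z), |f (x - z) - f x| := by
    rw [← setIntegral_union (Ioc_disjoint_Ioi le_rfl) measurableSet_Ioi
      hgint.integrableOn hgint.integrableOn, Ioc_union_Ioi_eq_Ioi (by linarith)]
  have hMz : 0 ≤ M * z := mul_nonneg hM0 hz.le
  rw [split1, split2]
  nlinarith [piece1, piece2, piece3]
end

section
/- Let f : ℝ → ℝ be an integrable unimodal probability density with mode m. Then for every z > 0, ∫_ℝ |f(x-z) - f(x)| dx = ∫_{(m, m+z)} |f(x-z) - f(x)| dx + ∫_{(m-z, m+z)} f(x) dx. -/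
open MeasureTheory

/-- Translation of a set integral. -/
lemma shift_setIntegral (f : ℝ → ℝ) (s : Set ℝ) (hs : MeasurableSet s) (z : ℝ)
    (h : MeasurableSet {x : ℝ | x - z ∈ s}) :
    ∫ x in {x : ℝ | x - z ∈ s}, f (x - z) = ∫ x in s, f x := by
  rw [← integral_indicator h, ← integral_indicator hs,
    ← integral_sub_right_eq_self (s.indicator f) z]
  rfl

lemma shift_Iic (f : ℝ → ℝ) (m z : ℝ) :
    ∫ x in Set.Iic m, f (x - z) = ∫ x in Set.Iic (m - z), f x := by
  have h : {x : ℝ | x - z ∈ Set.Iic (m - z)} = Set.Iic m := by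
    ext x; simp [Set.mem_Iic, sub_le_sub_iff_right]
  rw [← h]
  exact shift_setIntegral f _ measurableSet_Iic z (h ▸ measurableSet_Iic)

lemma shift_Ici (f : ℝ → ℝ) (m z : ℝ) :
    ∫ x in Set.Ici (m + z), f (x - z) = ∫ x in Set.Ici m, f x := by
  have h : {x : ℝ | x - z ∈ Set.Ici m} = Set.Ici (m + z) := by
    ext x; simp only [Set.mem_setOf_eq, Set.mem_Ici, le_sub_iff_add_le]
  rw [← h]
  exact shift_setIntegral f _ measurableSet_Ici z (h ▸ measurableSet_Ici)

theorem stmt6 (f : ℝ → ℝ) (m : ℝ)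
    (hf_nonneg : ∀ x, 0 ≤ f x) (hf_int : Integrable f) (hf_one : ∫ x, f x = 1)
    (hmono : MonotoneOn f (Set.Iic m)) (hanti : AntitoneOn f (Set.Ici m)) :
    ∀ z : ℝ, 0 < z →
      ∫ x, |f (x - z) - f x|
        = (∫ x in Set.Ioo m (m + z), |f (x - z) - f x|)
          + ∫ x in Set.Ioo (m - z) (m + z), f x := by
  intro z hz
  have hfz : Integrable (fun x => f (x - z)) := hf_int.comp_sub_right z
  have hg : Integrable (fun x => |f (x - z) - f x|) := (hfz.sub hf_int).abs
  have hsplit1 : ∫ x, |f (x - z) - f x|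
      = (∫ x in Set.Iic m, |f (x - z) - f x|) + ∫ x in Set.Ioi m, |f (x - z) - f x| :=
    (intervalIntegral.integral_Iic_add_Ioi hg.integrableOn hg.integrableOn).symm
  have hdisj1 : Disjoint (Set.Ioo m (m + z)) (Set.Ici (m + z)) := by
    apply Set.disjoint_left.mpr
    intro x hx hx2
    exact absurd hx2 (not_le.2 hx.2)
  have hsplit2 : ∫ x in Set.Ioi m, |f (x - z) - f x|
      = (∫ x in Set.Ioo m (m + z), |f (x - z) - f x|)
        + ∫ x in Set.Ici (m + z), |f (x - z) - f x| := by
    rw [← setIntegral_union hdisj1 measurableSet_Ici hg.integrableOn hg.integrableOn,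
      Set.Ioo_union_Ici_eq_Ioi (by linarith)]
  have h1 : ∫ x in Set.Iic m, |f (x - z) - f x| = ∫ x in Set.Iic m, (f x - f (x - z)) := by
    apply setIntegral_congr_fun measurableSet_Iic
    intro x hx
    simp only [Set.mem_Iic] at hx
    have hle : f (x - z) ≤ f x := hmono (by simp; linarith) (by simpa) (by linarith)
    have : |f (x - z) - f x| = f x - f (x - z) := by
      rw [abs_of_nonpos (by linarith), neg_sub]
    simpa using this
  have h2 : ∫ x in Set.Ici (m + z), |f (x - z) - f x|
      = ∫ x in Set.Ici (m + z), (f (x - z) - f x) := by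
    apply setIntegral_congr_fun measurableSet_Ici
    intro x hx
    simp only [Set.mem_Ici] at hx
    have hle : f x ≤ f (x - z) := hanti (by simp; linarith) (by simp; linarith) (by linarith)
    have : |f (x - z) - f x| = f (x - z) - f x := abs_of_nonneg (by linarith)
    simpa using this
  have e1 : ∫ x in Set.Iic m, (f x - f (x - z)) = ∫ x in Set.Ioc (m - z) m, f x := by
    rw [integral_sub hf_int.integrableOn hfz.integrableOn, shift_Iic]
    have hdisj : Disjoint (Set.Iic (m - z)) (Set.Ioc (m - z) m) := by
      apply Set.disjoint_left.mpr
      intro x hx hx2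
      exact absurd hx (not_le.2 hx2.1)
    have : ∫ x in Set.Iic m, f x
        = (∫ x in Set.Iic (m - z), f x) + ∫ x in Set.Ioc (m - z) m, f x := by
      rw [← setIntegral_union hdisj measurableSet_Ioc hf_int.integrableOn hf_int.integrableOn,
        Set.Iic_union_Ioc_eq_Iic (by linarith)]
    rw [this]; ring
  have e2 : ∫ x in Set.Ici (m + z), (f (x - z) - f x) = ∫ x in Set.Ioc m (m + z), f x := by
    rw [integral_sub hfz.integrableOn hf_int.integrableOn, shift_Ici]
    have hdisj : Disjoint (Set.Ico m (m + z)) (Set.Ici (m + z)) := by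
      apply Set.disjoint_left.mpr
      intro x hx hx2
      exact absurd hx2 (not_le.2 hx.2)
    have hI : ∫ x in Set.Ici m, f x
        = (∫ x in Set.Ico m (m + z), f x) + ∫ x in Set.Ici (m + z), f x := by
      rw [← setIntegral_union hdisj measurableSet_Ici hf_int.integrableOn hf_int.integrableOn,
        Set.Ico_union_Ici_eq_Ici (by linarith)]
    rw [hI, setIntegral_congr_set Ico_ae_eq_Ioc]; ring
  have final : (∫ x in Set.Ioc (m - z) m, f x) + ∫ x in Set.Ioc m (m + z), f x
      = ∫ x in Set.Ioo (m - z) (m + z), f x := by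
    have hdisj : Disjoint (Set.Ioc (m - z) m) (Set.Ioc m (m + z)) := by
      apply Set.disjoint_left.mpr
      intro x hx hx2
      exact absurd hx.2 (not_le.2 hx2.1)
    rw [← setIntegral_union hdisj measurableSet_Ioc hf_int.integrableOn hf_int.integrableOn,
      Set.Ioc_union_Ioc_eq_Ioc (by linarith) (by linarith),
      setIntegral_congr_set Ioo_ae_eq_Ioc.symm]
  rw [hsplit1, hsplit2, h1, h2, e1, e2]
  linarith [final]
end

section
/- Let g : [0,t] → ℝ be a C¹-diffeomorphism onto its range with nonvanishing derivative, let ν be a Lévy measure on ℝ, and define the pushforward Lévy measure ν_g(B) = ∫_{[0,t]} ∫_ℝ 1_{B \ {0}}(g(s)r) ν(dr) ds. Then the measure |x| ν_g(dx) is absolutely continuous with respect to Lebesgue measure with density k(x) = ∫_ℝ 1_{g([0,t])}(x/r) · (|x|/|r|) · |(g⁻¹)'(x/r)| ν(dr), which is finite for all x ≠ 0. -/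
open MeasureTheory

theorem my_lintegral_image {s : Set ℝ} {f f' : ℝ → ℝ}
    (hs : MeasurableSet s) (hf' : ∀ x ∈ s, HasDerivWithinAt f (f' x) s x)
    (hf : Set.InjOn f s) (φ : ℝ → ENNReal) :
    ∫⁻ x in f '' s, φ x = ∫⁻ x in s, ENNReal.ofReal |f' x| * φ (f x) := by
  simpa only [ContinuousLinearMap.det_toSpanSingleton] using
    lintegral_image_eq_lintegral_abs_det_fderiv_mul volume hs
      (fun x hx => (hf' x hx).hasFDerivWithinAt) hf φ

theorem my_nu_fin (ν : Measure ℝ) (hν : ∫⁻ x, ENNReal.ofReal (min 1 (x ^ 2)) ∂ν < ⊤)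
    (ε : ℝ) (hε : 0 < ε) : ν {r : ℝ | ε ≤ |r|} < ⊤ := by
  set a : ENNReal := ENNReal.ofReal (min 1 (ε ^ 2)) with ha
  have ha0 : a ≠ 0 := by
    simp only [ha, ne_eq, ENNReal.ofReal_eq_zero, not_le]
    positivity
  have hsub : {r : ℝ | ε ≤ |r|} ⊆ {r : ℝ | a ≤ ENNReal.ofReal (min 1 (r ^ 2))} := by
    intro r hr
    simp only [Set.mem_setOf_eq] at hr ⊢
    apply ENNReal.ofReal_le_ofReal
    have : ε ^ 2 ≤ r ^ 2 := by
      rw [← sq_abs r]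
      exact pow_le_pow_left₀ hε.le hr 2
    exact min_le_min le_rfl this
  calc ν {r : ℝ | ε ≤ |r|} ≤ ν {r : ℝ | a ≤ ENNReal.ofReal (min 1 (r ^ 2))} :=
        measure_mono hsub
    _ ≤ (∫⁻ x, ENNReal.ofReal (min 1 (x ^ 2)) ∂ν) / a := by
        apply meas_ge_le_lintegral_div ?_ ha0 ENNReal.ofReal_ne_top
        exact (ENNReal.measurable_ofReal.comp
          ((measurable_const.min (measurable_id.pow_const 2)))).aemeasurable
    _ < ⊤ := ENNReal.div_lt_top hν.ne ha0

theorem my_sigmaFinite (ν : Measure ℝ) (hν0 : ν {0} = 0)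
    (hν : ∫⁻ x, ENNReal.ofReal (min 1 (x ^ 2)) ∂ν < ⊤) : SigmaFinite ν := by
  refine ⟨⟨⟨fun n => {0} ∪ {r : ℝ | ((n : ℝ) + 1)⁻¹ ≤ |r|}, fun _ => trivial, ?_, ?_⟩⟩⟩
  · intro n
    calc ν ({0} ∪ {r : ℝ | ((n : ℝ) + 1)⁻¹ ≤ |r|})
        ≤ ν {0} + ν {r : ℝ | ((n : ℝ) + 1)⁻¹ ≤ |r|} := measure_union_le _ _
      _ < ⊤ := by
          rw [hν0, zero_add]
          exact my_nu_fin ν hν _ (by positivity)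
  · apply Set.eq_univ_of_forall
    intro x
    rcases eq_or_ne x 0 with rfl | hx
    · exact Set.mem_iUnion.2 ⟨0, Or.inl rfl⟩
    · obtain ⟨n, hn⟩ := exists_nat_gt |x|⁻¹
      refine Set.mem_iUnion.2 ⟨n, Or.inr ?_⟩
      simp only [Set.mem_setOf_eq]
      rw [inv_le_comm₀ (by positivity) (abs_pos.2 hx)]
      exact le_trans hn.le (by linarith)

theorem stmt10 (t : ℝ) (ht : 0 < t) (g ginv : ℝ → ℝ) (ν : Measure ℝ)
    (hg_smooth : ContDiffOn ℝ 1 g (Set.Icc 0 t))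
    (hg_inj : Set.InjOn g (Set.Icc 0 t))
    (hg_deriv : ∀ s ∈ Set.Icc 0 t, deriv g s ≠ 0)
    (hginv : ∀ s ∈ Set.Icc 0 t, ginv (g s) = s)
    (hginv_deriv : ∀ s ∈ Set.Icc 0 t, deriv ginv (g s) = (deriv g s)⁻¹)
    (hν0 : ν {0} = 0)
    (hν : ∫⁻ x, ENNReal.ofReal (min 1 (x ^ 2)) ∂ν < ⊤) :
    (∀ x : ℝ, x ≠ 0 →
      (∫⁻ r, Set.indicator (g '' Set.Icc 0 t)
          (fun _ => ENNReal.ofReal (|x| / |r| * |deriv ginv (x / r)|)) (x / r) ∂ν) < ⊤) ∧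
    ∀ A : Set ℝ, MeasurableSet A →
      (∫⁻ s in Set.Icc 0 t, ∫⁻ r,
          Set.indicator (A \ {0}) (fun y => ENNReal.ofReal |y|) (g s * r) ∂ν ∂volume)
        = ∫⁻ x in A, (∫⁻ r, Set.indicator (g '' Set.Icc 0 t)
            (fun _ => ENNReal.ofReal (|x| / |r| * |deriv ginv (x / r)|)) (x / r) ∂ν)
            ∂volume := by
  have hK : MeasurableSet (Set.Icc (0:ℝ) t) := measurableSet_Icc
  have hgc : ContinuousOn g (Set.Icc 0 t) := hg_smooth.continuousOn
  have hcomp : IsCompact (Set.Icc (0:ℝ) t) := isCompact_Icc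
  have hScomp : IsCompact (g '' Set.Icc 0 t) := hcomp.image_of_continuousOn hgc
  have hSmeas : MeasurableSet (g '' Set.Icc 0 t) := hScomp.measurableSet
  have hne : (Set.Icc (0:ℝ) t).Nonempty := Set.nonempty_Icc.2 ht.le
  have hdiff : ∀ s ∈ Set.Icc (0:ℝ) t, DifferentiableAt ℝ g s := by
    intro s hs
    by_contra h
    exact hg_deriv s hs (deriv_zero_of_not_differentiableAt h)
  have hU : UniqueDiffOn ℝ (Set.Icc (0:ℝ) t) := uniqueDiffOn_Icc ht
  have hderiv_cont : ContinuousOn (deriv g) (Set.Icc 0 t) :=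
    (hg_smooth.continuousOn_derivWithin hU le_rfl).congr
      (fun s hs => ((hdiff s hs).derivWithin (hU s hs)).symm)
  obtain ⟨s₀, hs₀, hmin⟩ := hcomp.exists_isMinOn hne
    (continuous_abs.comp_continuousOn hderiv_cont)
  set c : ℝ := |deriv g s₀| with hcdef
  have hc : 0 < c := abs_pos.2 (hg_deriv s₀ hs₀)
  obtain ⟨s₁, hs₁, hmax⟩ := hcomp.exists_isMaxOn hne (continuous_abs.comp_continuousOn hgc)
  set R : ℝ := |g s₁| + 1 with hRdef
  have hR : 0 < R := by positivity
  have hgb : ∀ s ∈ Set.Icc (0:ℝ) t, |g s| ≤ R := by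
    intro s hs
    have := hmax hs
    simp only [Set.mem_setOf_eq, Function.comp_apply] at this
    linarith [this]
  have hginvb : ∀ x ∈ g '' Set.Icc 0 t, |deriv ginv x| ≤ c⁻¹ := by
    rintro _ ⟨s, hs, rfl⟩
    rw [hginv_deriv s hs, abs_inv]
    have := hmin hs
    simp only [Set.mem_setOf_eq, Function.comp_apply] at this
    exact inv_anti₀ hc this
  set D : ℝ → ℝ → ENNReal := fun x r => Set.indicator (g '' Set.Icc 0 t)
      (fun _ => ENNReal.ofReal (|x| / |r| * |deriv ginv (x / r)|)) (x / r) with hD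
  constructor
  · -- finiteness
    intro x hx
    set ε : ℝ := |x| / R with hεdef
    have hε : 0 < ε := div_pos (abs_pos.2 hx) hR
    have hbnd : ∀ r : ℝ, D x r
        ≤ Set.indicator {r : ℝ | ε ≤ |r|} (fun _ => ENNReal.ofReal (R * c⁻¹)) r := by
      intro r
      rcases em (x / r ∈ g '' Set.Icc 0 t) with hmem | hmem
      · rw [hD]
        simp only []
        rw [Set.indicator_of_mem hmem]
        rcases eq_or_ne r 0 with rfl | hr
        · simp only [abs_zero, div_zero, zero_mul, ENNReal.ofReal_zero]
          exact zero_le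
        · obtain ⟨s, hs, hgs⟩ := hmem
          have habs : |x / r| ≤ R := by rw [← hgs]; exact hgb s hs
          have hrε : r ∈ {r : ℝ | ε ≤ |r|} := by
            simp only [Set.mem_setOf_eq, hεdef]
            rw [abs_div] at habs
            rw [div_le_iff₀ hR, mul_comm]
            exact (div_le_iff₀ (abs_pos.2 hr)).1 habs
          rw [Set.indicator_of_mem hrε]
          apply ENNReal.ofReal_le_ofReal
          have h1 : |x| / |r| ≤ R := by rw [← abs_div]; exact habs
          have h2 : |deriv ginv (x / r)| ≤ c⁻¹ := hginvb _ ⟨s, hs, hgs⟩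
          exact mul_le_mul h1 h2 (abs_nonneg _) hR.le
      · rw [hD]
        simp only []
        rw [Set.indicator_of_notMem hmem]
        exact zero_le
    calc ∫⁻ r, D x r ∂ν
        ≤ ∫⁻ r, Set.indicator {r : ℝ | ε ≤ |r|} (fun _ => ENNReal.ofReal (R * c⁻¹)) r ∂ν :=
          lintegral_mono hbnd
      _ = ENNReal.ofReal (R * c⁻¹) * ν {r : ℝ | ε ≤ |r|} :=
          lintegral_indicator_const ((isClosed_le continuous_const continuous_abs).measurableSet) _
      _ < ⊤ := ENNReal.mul_lt_top ENNReal.ofReal_lt_top (my_nu_fin ν hν ε hε)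
  · -- main identity
    intro A hA
    haveI : SigmaFinite ν := my_sigmaFinite ν hν0 hν
    set f : ℝ → ENNReal := Set.indicator (A \ {0}) (fun y => ENNReal.ofReal |y|) with hf
    have hfmeas : Measurable f :=
      (measurable_abs.ennreal_ofReal).indicator (hA.diff (measurableSet_singleton 0))
    have hGm : AEMeasurable (fun p : ℝ × ℝ => g p.1 * p.2)
        ((volume.restrict (Set.Icc (0:ℝ) t)).prod ν) := by
      rw [Measure.restrict_prod_eq_prod_univ]
      apply ContinuousOn.aemeasurable ?_ (hK.prod MeasurableSet.univ)
      exact (hgc.comp continuous_fst.continuousOn (fun p hp => hp.1)).mul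
        continuous_snd.continuousOn
    have hswap1 : (∫⁻ s in Set.Icc 0 t, ∫⁻ r, f (g s * r) ∂ν ∂volume)
        = ∫⁻ r, ∫⁻ s in Set.Icc 0 t, f (g s * r) ∂volume ∂ν :=
      lintegral_lintegral_swap (hfmeas.comp_aemeasurable hGm)
    have hstep : ∀ r : ℝ, r ≠ 0 →
        (∫⁻ s in Set.Icc 0 t, f (g s * r) ∂volume)
          = ∫⁻ y, Set.indicator A (fun y => D y r) y ∂volume := by
      intro r hr
      have h1 : ∫⁻ x in g '' Set.Icc 0 t, ENNReal.ofReal |deriv ginv x| * f (x * r)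
          = ∫⁻ s in Set.Icc 0 t, ENNReal.ofReal |deriv g s| *
              (ENNReal.ofReal |deriv ginv (g s)| * f (g s * r)) :=
        my_lintegral_image hK (fun s hs => (hdiff s hs).hasDerivAt.hasDerivWithinAt) hg_inj _
      have h1' : (∫⁻ s in Set.Icc 0 t, f (g s * r) ∂volume)
          = ∫⁻ x in g '' Set.Icc 0 t, ENNReal.ofReal |deriv ginv x| * f (x * r) := by
        rw [h1]
        apply setLIntegral_congr_fun hK
        intro s hs
        dsimp only
        rw [← mul_assoc, ← ENNReal.ofReal_mul (abs_nonneg _), hginv_deriv s hs, abs_inv,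
          mul_inv_cancel₀ (abs_ne_zero.2 (hg_deriv s hs)), ENNReal.ofReal_one, one_mul]
      have h2 : ∫⁻ y in (fun x => x * r) '' (g '' Set.Icc 0 t),
            ENNReal.ofReal (|r|⁻¹) * (ENNReal.ofReal |deriv ginv (y / r)| * f y)
          = ∫⁻ x in g '' Set.Icc 0 t, ENNReal.ofReal |r| * (ENNReal.ofReal (|r|⁻¹)
              * (ENNReal.ofReal |deriv ginv ((x * r) / r)| * f (x * r))) :=
        my_lintegral_image hSmeas (fun x _ => (hasDerivAt_mul_const r).hasDerivWithinAt)
          (fun a _ b _ h => mul_right_cancel₀ hr h) _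
      have h2' : ∫⁻ x in g '' Set.Icc 0 t, ENNReal.ofReal |deriv ginv x| * f (x * r)
          = ∫⁻ y in (fun x => x * r) '' (g '' Set.Icc 0 t),
              ENNReal.ofReal (|r|⁻¹) * (ENNReal.ofReal |deriv ginv (y / r)| * f y) := by
        rw [h2]
        apply setLIntegral_congr_fun hSmeas
        intro x _
        dsimp only
        rw [← mul_assoc, ← ENNReal.ofReal_mul (abs_nonneg _),
          mul_inv_cancel₀ (abs_ne_zero.2 hr), ENNReal.ofReal_one, one_mul,
          mul_div_cancel_right₀ x hr]
      have hTm : MeasurableSet ((fun x => x * r) '' (g '' Set.Icc 0 t)) :=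
        (hScomp.image (continuous_mul_right r)).measurableSet
      rw [h1', h2', ← lintegral_indicator hTm]
      apply lintegral_congr
      intro y
      rcases em (y / r ∈ g '' Set.Icc 0 t) with hmem | hmem
      · have hy : y ∈ (fun x => x * r) '' (g '' Set.Icc 0 t) :=
          ⟨y / r, hmem, div_mul_cancel₀ y hr⟩
        rw [Set.indicator_of_mem hy]
        rcases em (y ∈ A) with hyA | hyA
        · rw [Set.indicator_of_mem hyA]
          simp only [hD]
          rw [Set.indicator_of_mem hmem]
          rcases eq_or_ne y 0 with rfl | hy0
          · simp only [hf]
            have h0 : (0:ℝ) ∉ A \ {0} := fun h => h.2 rfl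
            rw [Set.indicator_of_notMem h0]
            simp
          · simp only [hf]
            have hmemd : y ∈ A \ {0} := ⟨hyA, hy0⟩
            rw [Set.indicator_of_mem hmemd]
            rw [← ENNReal.ofReal_mul (abs_nonneg _),
              ← ENNReal.ofReal_mul (inv_nonneg.2 (abs_nonneg r))]
            congr 1
            field_simp
        · rw [Set.indicator_of_notMem hyA]
          simp only [hf]
          rw [Set.indicator_of_notMem (fun h => hyA h.1), mul_zero, mul_zero]
      · have hy : y ∉ (fun x => x * r) '' (g '' Set.Icc 0 t) := by
          rintro ⟨x, hx, rfl⟩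
          rw [mul_div_cancel_right₀ x hr] at hmem
          exact hmem hx
        rw [Set.indicator_of_notMem hy]
        symm
        rcases em (y ∈ A) with h | h
        · rw [Set.indicator_of_mem h]
          simp only [hD]
          rw [Set.indicator_of_notMem hmem]
        · rw [Set.indicator_of_notMem h]
    have hae0 : ∀ᵐ r ∂ν, r ≠ 0 := by
      rw [ae_iff]
      convert hν0 using 2
      simp
    have hswap1' : (∫⁻ s in Set.Icc 0 t, ∫⁻ r, f (g s * r) ∂ν ∂volume)
        = ∫⁻ r, ∫⁻ y, Set.indicator A (fun y => D y r) y ∂volume ∂ν := by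
      rw [hswap1]
      apply lintegral_congr_ae
      filter_upwards [hae0] with r hr using hstep r hr
    have hFm : Measurable (fun p : ℝ × ℝ => Set.indicator A (fun y => D y p.2) p.1) := by
      have heq : (fun p : ℝ × ℝ => Set.indicator A (fun y => D y p.2) p.1)
          = fun p : ℝ × ℝ => Set.indicator
              (Prod.fst ⁻¹' A ∩ (fun p : ℝ × ℝ => p.1 / p.2) ⁻¹' (g '' Set.Icc 0 t))
              (fun p => ENNReal.ofReal (|p.1| / |p.2| * |deriv ginv (p.1 / p.2)|)) p := by
        funext p
        simp only [hD, Set.indicator_apply, Set.mem_inter_iff, Set.mem_preimage]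
        by_cases h1 : p.1 ∈ A <;> by_cases h2 : p.1 / p.2 ∈ g '' Set.Icc 0 t <;>
          simp [h1, h2]
      rw [heq]
      apply Measurable.indicator
      · exact ((measurable_fst.abs.div measurable_snd.abs).mul
          (((measurable_deriv ginv).comp (measurable_fst.div measurable_snd)).abs)).ennreal_ofReal
      · exact (measurable_fst hA).inter ((measurable_fst.div measurable_snd) hSmeas)
    have hswap2 : (∫⁻ r, ∫⁻ y, Set.indicator A (fun y => D y r) y ∂volume ∂ν)
        = ∫⁻ y, ∫⁻ r, Set.indicator A (fun y => D y r) y ∂ν ∂volume := by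
      exact lintegral_lintegral_swap ((hFm.comp measurable_swap).aemeasurable)
    calc (∫⁻ s in Set.Icc 0 t, ∫⁻ r, f (g s * r) ∂ν ∂volume)
        = ∫⁻ r, ∫⁻ y, Set.indicator A (fun y => D y r) y ∂volume ∂ν := hswap1'
      _ = ∫⁻ y, ∫⁻ r, Set.indicator A (fun y => D y r) y ∂ν ∂volume := hswap2
      _ = ∫⁻ y, Set.indicator A (fun y => ∫⁻ r, D y r ∂ν) y ∂volume := by
          apply lintegral_congr
          intro y
          rcases em (y ∈ A) with h | h
          · rw [Set.indicator_of_mem h]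
            apply lintegral_congr
            intro r
            rw [Set.indicator_of_mem h]
          · rw [Set.indicator_of_notMem h]
            simp only [Set.indicator_of_notMem h, lintegral_zero]
      _ = ∫⁻ y in A, ∫⁻ r, D y r ∂ν ∂volume := lintegral_indicator hA _
end

section
/- Let g : [0,t] → ℝ be measurable satisfying the Lusin (N⁻¹)-condition (preimages under g of Lebesgue null sets are Lebesgue null), and let ν be a Lévy measure on ℝ. Then the measure ν_g defined by ν_g(B) = ∫_{[0,t]} ∫_ℝ 1_{B \ {0}}(g(s)r) ν(dr) ds is absolutely continuous with respect to Lebesgue measure. -/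
open MeasureTheory
open scoped ENNReal

theorem stmt12 (t : ℝ) (ht : 0 < t) (g : ℝ → ℝ) (hg_meas : Measurable g)
    (hLusin : ∀ B : Set ℝ, MeasurableSet B → volume B = 0 → volume (g ⁻¹' B) = 0)
    (ν : Measure ℝ) (hν0 : ν {0} = 0)
    (hν : ∫⁻ x, ENNReal.ofReal (min 1 (x ^ 2)) ∂ν < ⊤) :
    ∀ B : Set ℝ, MeasurableSet B → volume B = 0 →
      (∫⁻ s in Set.Icc 0 t, ν ((fun r => g s * r) ⁻¹' (B \ {0})) ∂volume) = 0 := by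
  -- ν is sigma-finite
  have hfin : ∀ n : ℕ, ν ({0} ∪ {x : ℝ | 1 / (n + 1) ≤ |x|}) < ⊤ := by
    intro n
    set c : ℝ≥0∞ := ENNReal.ofReal (min 1 ((1 / (n + 1 : ℝ)) ^ 2)) with hc
    have hcpos : 0 < c := by
      rw [hc]
      apply ENNReal.ofReal_pos.2
      apply lt_min one_pos
      positivity
    have hS : MeasurableSet {x : ℝ | 1 / (n + 1 : ℝ) ≤ |x|} :=
      measurableSet_le measurable_const measurable_norm
    have hle : c * ν {x : ℝ | 1 / (n + 1 : ℝ) ≤ |x|} ≤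
        ∫⁻ x, ENNReal.ofReal (min 1 (x ^ 2)) ∂ν := by
      rw [← setLIntegral_const]
      refine le_trans (setLIntegral_mono (by measurability) ?_) (setLIntegral_le_lintegral _ _)
      intro x hx
      apply ENNReal.ofReal_le_ofReal
      rcases le_total 1 (x ^ 2) with h | h
      · simp [min_eq_left h, min_le_left]
      · rw [min_eq_right h]
        apply min_le_of_right_le
        have : (1 / (n + 1 : ℝ)) ^ 2 ≤ |x| ^ 2 := by
          apply pow_le_pow_left₀ (by positivity) hx
        simpa [sq_abs] using this
    have h2 : ν {x : ℝ | 1 / (n + 1 : ℝ) ≤ |x|} < ⊤ := by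
      by_contra h
      push_neg at h
      rw [top_le_iff.1 h, ENNReal.mul_top hcpos.ne'] at hle
      exact hν.ne (top_le_iff.1 (hle.trans hν.le |>.antisymm le_top ▸ hle))
    calc ν ({0} ∪ {x : ℝ | 1 / (n + 1 : ℝ) ≤ |x|})
        ≤ ν {0} + ν {x : ℝ | 1 / (n + 1 : ℝ) ≤ |x|} := measure_union_le _ _
      _ < ⊤ := by rw [hν0, zero_add]; exact h2
  haveI : SigmaFinite ν := by
    refine ⟨⟨⟨fun n => {0} ∪ {x : ℝ | 1 / (n + 1) ≤ |x|}, fun _ => trivial, hfin, ?_⟩⟩⟩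
    ext x
    simp only [Set.mem_iUnion, Set.mem_union, Set.mem_singleton_iff, Set.mem_setOf_eq,
      Set.mem_univ, iff_true]
    rcases eq_or_ne x 0 with h | h
    · exact ⟨0, Or.inl h⟩
    · obtain ⟨n, hn⟩ := exists_nat_one_div_lt (abs_pos.2 h)
      exact ⟨n, Or.inr hn.le⟩
  intro B hB hB0
  classical
  have hBd : MeasurableSet (B \ {0}) := hB.diff (measurableSet_singleton 0)
  -- rewrite as double integral
  have key : ∀ s : ℝ, ν ((fun r => g s * r) ⁻¹' (B \ {0})) =
      ∫⁻ r, (B \ {0}).indicator (fun _ => (1 : ℝ≥0∞)) (g s * r) ∂ν := by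
    intro s
    rw [show ν ((fun r => g s * r) ⁻¹' (B \ {0})) =
        1 * ν ((fun r => g s * r) ⁻¹' (B \ {0})) from (one_mul _).symm,
      ← lintegral_indicator_const
        (show MeasurableSet ((fun r => g s * r) ⁻¹' (B \ {0})) from hBd.preimage (by fun_prop)) 1]
    congr 1
  simp_rw [key]
  rw [lintegral_lintegral_swap]
  · have hzero : ∀ r : ℝ,
        ∫⁻ s in Set.Icc 0 t, (B \ {0}).indicator (fun _ => (1 : ℝ≥0∞)) (g s * r) ∂volume = 0 := by
      intro r
      have heq : (fun s => (B \ {0}).indicator (fun _ => (1 : ℝ≥0∞)) (g s * r)) =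
          ((fun s => g s * r) ⁻¹' (B \ {0})).indicator (fun _ => 1) := by
        ext s
        rw [Set.indicator_apply, Set.indicator_apply]
        exact if_congr Iff.rfl rfl rfl
      rw [heq, lintegral_indicator_const
        (hBd.preimage (show Measurable (fun s => g s * r) from (hg_meas.mul measurable_const))) 1, one_mul]
      have hvol : volume ((fun s => g s * r) ⁻¹' (B \ {0})) = 0 := by
        rcases eq_or_ne r 0 with hr | hr
        · have : (fun s => g s * r) ⁻¹' (B \ {0}) = ∅ := by
            ext s
            simp [hr, Set.mem_preimage]
          simp [this]
        · have hpre : (fun s => g s * r) ⁻¹' (B \ {0}) =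
              g ⁻¹' ((fun x => x * r) ⁻¹' (B \ {0})) := rfl
          rw [hpre]
          apply hLusin _ (hBd.preimage (measurable_mul_const r))
          rw [Real.volume_preimage_mul_right hr, measure_mono_null Set.diff_subset hB0, mul_zero]
      exact le_antisymm ((Measure.restrict_apply_le _ _).trans hvol.le) zero_le
    simp_rw [hzero]
    exact lintegral_zero
  · exact ((measurable_const.indicator hBd).comp
      ((hg_meas.comp measurable_fst).mul measurable_snd)).aemeasurable
end

section
/- Let g : [0,∞) → (0,∞) be continuous, strictly positive, attaining its maximum c, piecewise C¹-diffeomorphic with respect to a decomposition 0 = t₀ < t₁ < ⋯ → ∞, and suppose liminf_{x→∞, x ∉ T} |g(x)/g'(x)| = α ∈ (0,∞], where T = {t_i}. Set h(s) = Σ_{i : s ∈ g((t_i,t_{i+1}))} |s| |(g⁻¹|_{(t_i,t_{i+1})})'(s)|. If g(y_n) = x_n with x_n → 0+, x_n ∉ g(T), and y_n → ∞, then liminf_{n→∞} h(x_n) ≥ α. -/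
open MeasureTheory Filter ENNReal

theorem stmt16 (g : ℝ → ℝ) (t : ℕ → ℝ) (ginv : ℕ → ℝ → ℝ) (c : ℝ)
    (hg_cont : Continuous g) (hg_pos : ∀ x : ℝ, 0 ≤ x → 0 < g x)
    (ht0 : t 0 = 0) (ht_mono : StrictMono t) (ht_top : Tendsto t atTop atTop)
    (hmax : (∀ x : ℝ, 0 ≤ x → g x ≤ c) ∧ ∃ x : ℝ, 0 ≤ x ∧ g x = c)
    (hg_smooth : ∀ i : ℕ, ContDiffOn ℝ 1 g (Set.Ioo (t i) (t (i + 1))))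
    (hg_inj : ∀ i : ℕ, Set.InjOn g (Set.Ioo (t i) (t (i + 1))))
    (hg_deriv : ∀ i : ℕ, ∀ s ∈ Set.Ioo (t i) (t (i + 1)), deriv g s ≠ 0)
    (hginv : ∀ i : ℕ, ∀ s ∈ Set.Ioo (t i) (t (i + 1)), ginv i (g s) = s)
    (α : ℝ≥0∞) (hα : 0 < α)
    (hliminf : liminf (fun x : ℝ => ENNReal.ofReal |g x / deriv g x|)
        (atTop ⊓ Filter.principal (Set.range t)ᶜ) = α)
    (h : ℝ → ℝ≥0∞)
    (hh : ∀ s : ℝ, h s = ∑' i : ℕ, Set.indicator (g '' Set.Ioo (t i) (t (i + 1)))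
        (fun _ => ENNReal.ofReal (|s| * |deriv (ginv i) s|)) s)
    (x y : ℕ → ℝ) (hxy : ∀ n, g (y n) = x n)
    (hx_pos : ∀ n, 0 < x n) (hx_lim : Tendsto x atTop (nhds 0))
    (hx_notT : ∀ n, x n ∉ g '' Set.range t)
    (hy_top : Tendsto y atTop atTop) :
    α ≤ liminf (fun n => h (x n)) atTop := by
  classical
  have hynotT : ∀ n, y n ∉ Set.range t := by
    rintro n ⟨j, hj⟩
    exact hx_notT n ⟨t j, ⟨j, rfl⟩, hj ▸ hxy n⟩
  have key : ∀ᶠ n in atTop, ENNReal.ofReal |g (y n) / deriv g (y n)| ≤ h (x n) := by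
    filter_upwards [hy_top.eventually_gt_atTop 0] with n hn
    have hex : ∃ m, y n < t m := (ht_top.eventually_gt_atTop (y n)).exists
    have hk : y n < t (Nat.find hex) := Nat.find_spec hex
    have hk0 : Nat.find hex ≠ 0 := by
      intro h0
      rw [h0, ht0] at hk
      exact absurd hk (not_lt.2 hn.le)
    obtain ⟨i, hik⟩ := Nat.exists_eq_succ_of_ne_zero hk0
    have hle : t i ≤ y n := not_lt.1 (Nat.find_min hex (by omega))
    have hyI : y n ∈ Set.Ioo (t i) (t (i + 1)) := by
      refine ⟨lt_of_le_of_ne hle fun hEq => hynotT n ⟨i, hEq⟩, ?_⟩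
      rwa [hik] at hk
    have hIoo : Set.Ioo (t i) (t (i + 1)) ∈ nhds (y n) := isOpen_Ioo.mem_nhds hyI
    have hcd : ContDiffAt ℝ 1 g (y n) := (hg_smooth i).contDiffAt hIoo
    have hsd : HasStrictDerivAt g (deriv g (y n)) (y n) := hcd.hasStrictDerivAt one_ne_zero
    have hne : deriv g (y n) ≠ 0 := hg_deriv i _ hyI
    have hinv : HasStrictDerivAt (ginv i) (deriv g (y n))⁻¹ (g (y n)) :=
      hsd.to_local_left_inverse hne (by filter_upwards [hIoo] with s hs; exact hginv i s hs)
    have hderiv : deriv (ginv i) (x n) = (deriv g (y n))⁻¹ := by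
      rw [← hxy n]; exact hinv.hasDerivAt.deriv
    have hmem : x n ∈ g '' Set.Ioo (t i) (t (i + 1)) := ⟨y n, hyI, hxy n⟩
    calc ENNReal.ofReal |g (y n) / deriv g (y n)|
        = Set.indicator (g '' Set.Ioo (t i) (t (i + 1)))
            (fun _ => ENNReal.ofReal (|x n| * |deriv (ginv i) (x n)|)) (x n) := by
          rw [Set.indicator_of_mem hmem, hderiv, ← hxy n, div_eq_mul_inv, abs_mul, abs_inv]
      _ ≤ h (x n) := by rw [hh]; exact ENNReal.le_tsum i
  have hmap : map y atTop ≤ atTop ⊓ Filter.principal (Set.range t)ᶜ :=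
    tendsto_inf.2 ⟨hy_top, tendsto_principal.2 (Eventually.of_forall hynotT)⟩
  calc α = liminf (fun x : ℝ => ENNReal.ofReal |g x / deriv g x|)
        (atTop ⊓ Filter.principal (Set.range t)ᶜ) := hliminf.symm
    _ ≤ liminf (fun n => ENNReal.ofReal |g (y n) / deriv g (y n)|) atTop := by
        rw [show (fun n => ENNReal.ofReal |g (y n) / deriv g (y n)|)
            = (fun x : ℝ => ENNReal.ofReal |g x / deriv g x|) ∘ y from rfl, liminf_comp]
        exact liminf_le_liminf_of_le hmap
    _ ≤ liminf (fun n => h (x n)) atTop := liminf_le_liminf key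
end
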